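/- Let a > 0, D₁ > 0, D₂ > 0, τ > 0 and r₀ > 0 be fixed. Then the mean channel impulse response m(t) = ∫₀^∞ ĥ(r,τ)·f_{r,t}(r) dr tends to 0 as t → ∞. -/

import Mathlib

open MeasureTheory Real Filter

/-- The channel impulse response at distance `r` and elapsed time `τ`. -/
noncomputable def hCIR (a D₁ τ r : ℝ) : ℝ :=
  a / Real.sqrt (4 * π * D₁ * τ ^ 3) * (1 - a / r) * Real.exp (-(r - a) ^ 2 / (4 * D₁ * τ))

/-- The density of the distance between transmitter and receiver at time `t`. -/
noncomputable def fdist (r₀ D₂ t x : ℝ) : ℝ :=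
  if 0 < x then
    x / (r₀ * Real.sqrt (π * D₂ * t)) * Real.exp (-(x ^ 2 + r₀ ^ 2) / (4 * D₂ * t))
      * Real.sinh (r₀ * x / (2 * D₂ * t))
  else 0

/-!
Since `sinh y ≤ eʸ / 2`, the Gaussian factors of `f_{r,t}(x)` combine into
`exp (-(x - r₀)² / (4 D₂ t)) ≤ 1`, so `f_{r,t}(x) ≤ x / (2 r₀ √(π D₂ t))`. On the other hand
`x · |ĥ(x, τ)|` is dominated by the integrable Gaussian envelope `(x + a) · exp (-(x - a)² / (4 D₁ τ))`
(up to a constant), so the mean impulse response is `O(t^{-1/2})`.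
-/

theorem tendsto_integral_zero_of_norm_le_mul {α ι E : Type*} [MeasurableSpace α]
    [NormedAddCommGroup E] [NormedSpace ℝ E] {μ : Measure α} {l : Filter ι}
    {F : ι → α → E} {g : α → ℝ} {φ : ι → ℝ} (hg : Integrable g μ) (hφ : Tendsto φ l (nhds 0))
    (hF : ∀ᶠ i in l, ∀ᵐ x ∂μ, ‖F i x‖ ≤ g x * φ i) :
    Tendsto (fun i => ∫ x, F i x ∂μ) l (nhds 0) := by
  have hbound : Tendsto (fun i => (∫ x, g x ∂μ) * φ i) l (nhds 0) := by
    simpa using hφ.const_mul (∫ x, g x ∂μ)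
  refine squeeze_zero_norm' ?_ hbound
  filter_upwards [hF] with i hi
  rw [← integral_mul_const]
  exact norm_integral_le_of_norm_le (hg.mul_const _) hi

theorem integrable_add_mul_exp_neg_sq_sub_div {s : ℝ} (hs : 0 < s) (a c : ℝ) :
    Integrable fun x : ℝ => (x + c) * exp (-(x - a) ^ 2 / s) := by
  have hcentered : Integrable fun y : ℝ => (y + (a + c)) * exp (-s⁻¹ * y ^ 2) := by
    refine ((integrable_mul_exp_neg_mul_sq (inv_pos.2 hs)).add
      ((integrable_exp_neg_mul_sq (inv_pos.2 hs)).const_mul (a + c))).congr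
      (Eventually.of_forall fun y => ?_)
    simp only [Pi.add_apply]
    ring
  refine (hcentered.comp_sub_right a).congr (Eventually.of_forall fun x => ?_)
  simp only [neg_mul, inv_mul_eq_div, neg_div]
  ring

theorem abs_hCIR_mul_le {a D₁ τ x : ℝ} (ha : 0 ≤ a) (hx : 0 < x) :
    |hCIR a D₁ τ x| * x ≤
      a / √(4 * π * D₁ * τ ^ 3) * ((x + a) * exp (-(x - a) ^ 2 / (4 * D₁ * τ))) := by
  have hmul : hCIR a D₁ τ x * x =
      a / √(4 * π * D₁ * τ ^ 3) * ((x - a) * exp (-(x - a) ^ 2 / (4 * D₁ * τ))) := by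
    rw [hCIR]
    field_simp
  have habs : |hCIR a D₁ τ x| * x = |hCIR a D₁ τ x * x| := by rw [abs_mul, abs_of_pos hx]
  rw [habs, hmul, abs_mul, abs_mul,
    abs_of_nonneg (by positivity), abs_of_pos (exp_pos _)]
  gcongr
  exact abs_sub_le_of_nonneg_of_le hx.le (by linarith) ha (by linarith)

theorem fdist_nonneg {r₀ D₂ t : ℝ} (hr₀ : 0 ≤ r₀) (hD₂ : 0 ≤ D₂) (ht : 0 ≤ t) (x : ℝ) :
    0 ≤ fdist r₀ D₂ t x := by
  rw [fdist]
  split_ifs with hx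
  · have : 0 ≤ sinh (r₀ * x / (2 * D₂ * t)) := sinh_nonneg_iff.2 (by positivity)
    positivity
  · rfl

theorem fdist_le {r₀ D₂ t x : ℝ} (hr₀ : 0 ≤ r₀) (hD₂ : 0 ≤ D₂) (ht : 0 ≤ t) (hx : 0 < x) :
    fdist r₀ D₂ t x ≤ x / (2 * r₀ * √(π * D₂ * t)) := by
  have hsinh : sinh (r₀ * x / (2 * D₂ * t)) ≤ exp (r₀ * x / (2 * D₂ * t)) / 2 := by
    rw [sinh_eq]
    linarith [exp_pos (-(r₀ * x / (2 * D₂ * t)))]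
  have hgauss : exp (-(x ^ 2 + r₀ ^ 2) / (4 * D₂ * t)) * exp (r₀ * x / (2 * D₂ * t)) ≤ 1 := by
    rw [← exp_add, exp_le_one_iff]
    have hsq : -(x ^ 2 + r₀ ^ 2) / (4 * D₂ * t) + r₀ * x / (2 * D₂ * t) =
        -((x - r₀) ^ 2 / (4 * D₂ * t)) := by
      simp only [div_eq_mul_inv, mul_inv]
      ring
    rw [hsq, neg_nonpos]
    positivity
  rw [fdist, if_pos hx]
  calc x / (r₀ * √(π * D₂ * t)) * exp (-(x ^ 2 + r₀ ^ 2) / (4 * D₂ * t))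
        * sinh (r₀ * x / (2 * D₂ * t))
      ≤ x / (r₀ * √(π * D₂ * t)) * exp (-(x ^ 2 + r₀ ^ 2) / (4 * D₂ * t))
          * (exp (r₀ * x / (2 * D₂ * t)) / 2) := by gcongr
    _ = x / (r₀ * √(π * D₂ * t)) *
          (exp (-(x ^ 2 + r₀ ^ 2) / (4 * D₂ * t)) * exp (r₀ * x / (2 * D₂ * t))) / 2 := by ring
    _ ≤ x / (r₀ * √(π * D₂ * t)) * 1 / 2 := by gcongr
    _ = x / (2 * r₀ * √(π * D₂ * t)) := by ring

theorem tendsto_inv_mul_sqrt_atTop_zero {c d : ℝ} (hc : 0 < c) (hd : 0 < d) :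
    Tendsto (fun t => (c * √(d * t))⁻¹) atTop (nhds 0) :=
  tendsto_inv_atTop_zero.comp <| (tendsto_sqrt_atTop.comp <|
    tendsto_id.const_mul_atTop hd).const_mul_atTop hc

/-- The mean channel impulse response tends to zero as time tends to infinity. -/
theorem mean_CIR_tendsto_zero (a D₁ D₂ τ r₀ : ℝ) (ha : 0 < a) (hD₁ : 0 < D₁)
    (hD₂ : 0 < D₂) (hτ : 0 < τ) (hr₀ : 0 < r₀) :
    Tendsto (fun t => ∫ r in Set.Ioi (0:ℝ), hCIR a D₁ τ r * fdist r₀ D₂ t r)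
      atTop (nhds 0) := by
  have henvelope := ((integrable_add_mul_exp_neg_sq_sub_div (by positivity : 0 < 4 * D₁ * τ)
    a a).const_mul (a / √(4 * π * D₁ * τ ^ 3))).integrableOn (s := Set.Ioi 0)
  refine tendsto_integral_zero_of_norm_le_mul henvelope
    (tendsto_inv_mul_sqrt_atTop_zero (by positivity : 0 < 2 * r₀) (by positivity : 0 < π * D₂)) ?_
  filter_upwards [eventually_gt_atTop 0] with t ht
  refine (ae_restrict_iff' measurableSet_Ioi).2 (Eventually.of_forall fun x (hx : 0 < x) => ?_)
  have hf := fdist_le (t := t) hr₀.le hD₂.le ht.le hx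
  rw [div_eq_mul_inv] at hf
  calc ‖hCIR a D₁ τ x * fdist r₀ D₂ t x‖ = |hCIR a D₁ τ x| * fdist r₀ D₂ t x := by
        rw [norm_mul, norm_of_nonneg (fdist_nonneg hr₀.le hD₂.le ht.le x), norm_eq_abs]
    _ ≤ |hCIR a D₁ τ x| * x * (2 * r₀ * √(π * D₂ * t))⁻¹ := by
        rw [mul_assoc]
        gcongr
    _ ≤ _ := mul_le_mul_of_nonneg_right (abs_hCIR_mul_le ha.le hx) (by positivity)
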